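/- Let T be a product of two orthogonal projections on a Hilbert space H. Then T admits exactly one factorization T = P_M P_N with M, N closed subspaces if and only if R(T)^⊥ ∩ N(T) = {0}. -/

import Mathlib

open ContinuousLinearMap Submodule LinearMap

variable {H : Type*} [NormedAddCommGroup H] [InnerProductSpace ℂ H] [CompleteSpace H]

/-- `P` is an orthogonal projection: `P² = P = P*`. -/
def IsOrthoProj (P : H →L[ℂ] H) : Prop :=
  P ∘L P = P ∧ ContinuousLinearMap.adjoint P = P

/-- The orthogonal projection onto a (complete, i.e. closed) subspace,
as an operator on `H`. -/
noncomputable def projOn (K : Submodule ℂ H) [CompleteSpace K] : H →L[ℂ] H :=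
  K.subtypeL.comp (orthogonalProjection K)

/-- The orthogonal projection onto a closed subspace, as an operator on `H`. -/
noncomputable def projOnc (K : Submodule ℂ H) (hK : IsClosed (K : Set H)) : H →L[ℂ] H :=
  haveI : CompleteSpace K := hK.completeSpace_coe
  K.subtypeL.comp (orthogonalProjection K)

/-!
Write `T = P_M P_N`, so that `T† = P_N P_M` and `R(T)ᗮ ∩ N(T) = N(T†) ∩ N(T)`.  If `Tx = 0` then
`T (P_N x) = 0` and `T† (P_N x) = P_N (T x) = 0`, so `P_N x` lies in this intersection.  Hence, when
the intersection is trivial, `N(T) = Nᗮ` and, by the same argument for `T†`, `N(T†) = Mᗮ`: the pair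
`(M, N) = (R(T)ᗮᗮ, N(T)ᗮ)` is determined by `T`.  Conversely `T = P_{R(T)ᗮᗮ} P_{N(T)ᗮ}` always
holds, and the intersection `K` is orthogonal to both `R(T)ᗮᗮ` and `N(T)ᗮ`, so replacing `N(T)ᗮ`
by `N(T)ᗮ ⊕ K` does not change the product; this is a second factorization unless `K = 0`.
-/

namespace Submodule

section Orthogonal

variable {𝕜 E : Type*} [RCLike 𝕜] [NormedAddCommGroup E] [InnerProductSpace 𝕜 E]

theorem hasOrthogonalProjection_iff_isClosed [CompleteSpace E] {K : Submodule 𝕜 E} :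
    K.HasOrthogonalProjection ↔ IsClosed (K : Set E) :=
  ⟨fun _ ↦ K.orthogonal_orthogonal ▸ Kᗮ.isClosed_orthogonal,
    fun h ↦ have := h.completeSpace_coe; inferInstance⟩

variable {U V W : Submodule 𝕜 E} [U.HasOrthogonalProjection] [V.HasOrthogonalProjection]

theorem IsOrtho.sub_starProjection_add_mem_orthogonal_sup (h : U ⟂ V) (v : E) :
    v - (U.starProjection v + V.starProjection v) ∈ (U ⊔ V)ᗮ := by
  rw [← inf_orthogonal]
  constructor
  · rw [← sub_sub]
    exact sub_mem (sub_starProjection_mem_orthogonal v)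
      (isOrtho_iff_le.mp h.symm (V.starProjection_apply_mem v))
  · rw [add_comm, ← sub_sub]
    exact sub_mem (sub_starProjection_mem_orthogonal v)
      (isOrtho_iff_le.mp h (U.starProjection_apply_mem v))

theorem IsOrtho.hasOrthogonalProjection_sup (h : U ⟂ V) : (U ⊔ V).HasOrthogonalProjection :=
  ⟨fun v ↦ ⟨_, add_mem_sup (U.starProjection_apply_mem v) (V.starProjection_apply_mem v),
    h.sub_starProjection_add_mem_orthogonal_sup v⟩⟩

theorem IsOrtho.starProjection_sup (h : U ⟂ V) [(U ⊔ V).HasOrthogonalProjection] :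
    (U ⊔ V).starProjection = U.starProjection + V.starProjection :=
  ContinuousLinearMap.ext fun v ↦ eq_starProjection_of_mem_orthogonal
    (add_mem_sup (U.starProjection_apply_mem v) (V.starProjection_apply_mem v))
    (h.sub_starProjection_add_mem_orthogonal_sup v)

theorem starProjection_comp_starProjection_sup_of_isOrtho [W.HasOrthogonalProjection]
    [(V ⊔ W).HasOrthogonalProjection] (hUW : U ⟂ W) (hVW : V ⟂ W) :
    U.starProjection ∘L (V ⊔ W).starProjection = U.starProjection ∘L V.starProjection := by
  rw [hVW.starProjection_sup, ContinuousLinearMap.comp_add,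
    hUW.starProjection_comp_starProjection, add_zero]

theorem starProjection_comp_starProjection_of_ge (h : U ≤ V) :
    V.starProjection ∘L U.starProjection = U.starProjection :=
  ContinuousLinearMap.ext fun v ↦
    starProjection_eq_self_iff.mpr (h (U.starProjection_apply_mem v))

end Orthogonal

section ProductOfProjections

open scoped InnerProduct

variable {𝕜 E : Type*} [RCLike 𝕜] [NormedAddCommGroup E] [InnerProductSpace 𝕜 E] [CompleteSpace E]
  {M N : Submodule 𝕜 E} [M.HasOrthogonalProjection] [N.HasOrthogonalProjection]

theorem adjoint_starProjection_comp_starProjection :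
    (M.starProjection ∘L N.starProjection)† = N.starProjection ∘L M.starProjection := by
  rw [ContinuousLinearMap.adjoint_comp, (isSelfAdjoint_starProjection M).adjoint_eq,
    (isSelfAdjoint_starProjection N).adjoint_eq]

theorem starProjection_apply_mem_orthogonal_range_inf_ker {x : E}
    (hx : x ∈ (M.starProjection ∘L N.starProjection).ker) :
    N.starProjection x ∈
      (M.starProjection ∘L N.starProjection).rangeᗮ ⊓
        (M.starProjection ∘L N.starProjection).ker := by
  have hN : N.starProjection (N.starProjection x) = N.starProjection x :=
    starProjection_eq_self_iff.mpr (N.starProjection_apply_mem x)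
  have hx' : M.starProjection (N.starProjection x) = 0 := hx
  rw [ContinuousLinearMap.orthogonal_range, adjoint_starProjection_comp_starProjection]
  constructor
  · simp [hx']
  · simpa [hN] using hx'

theorem ker_starProjection_comp_starProjection_eq_orthogonal
    (h : (M.starProjection ∘L N.starProjection).rangeᗮ ⊓
      (M.starProjection ∘L N.starProjection).ker = ⊥) :
    (M.starProjection ∘L N.starProjection).ker = Nᗮ := by
  refine le_antisymm (fun x hx ↦ (N.starProjection_apply_eq_zero_iff).mp ?_) fun x hx ↦ ?_
  · exact (mem_bot 𝕜).mp (h ▸ starProjection_apply_mem_orthogonal_range_inf_ker hx)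
  · simp [(N.starProjection_apply_eq_zero_iff).mpr hx]

theorem eq_of_orthogonal_range_inf_ker_eq_bot
    (h : (M.starProjection ∘L N.starProjection).rangeᗮ ⊓
      (M.starProjection ∘L N.starProjection).ker = ⊥) :
    M = (M.starProjection ∘L N.starProjection).rangeᗮᗮ ∧
      N = (M.starProjection ∘L N.starProjection).kerᗮ := by
  have h' : (N.starProjection ∘L M.starProjection).rangeᗮ ⊓
      (N.starProjection ∘L M.starProjection).ker = ⊥ := by
    rw [← adjoint_starProjection_comp_starProjection, ContinuousLinearMap.orthogonal_range,
      ContinuousLinearMap.adjoint_adjoint, ← ContinuousLinearMap.orthogonal_range, inf_comm, h]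
  rw [ContinuousLinearMap.orthogonal_range, adjoint_starProjection_comp_starProjection,
    ker_starProjection_comp_starProjection_eq_orthogonal h',
    ker_starProjection_comp_starProjection_eq_orthogonal h, M.orthogonal_orthogonal,
    N.orthogonal_orthogonal]
  exact ⟨rfl, rfl⟩

theorem starProjection_comp_starProjection_eq_orthogonal_range_ker :
    M.starProjection ∘L N.starProjection =
      (M.starProjection ∘L N.starProjection).rangeᗮᗮ.starProjection ∘L
        (M.starProjection ∘L N.starProjection).kerᗮ.starProjection := by
  set T := M.starProjection ∘L N.starProjection
  have := T.isClosed_ker.completeSpace_coe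
  have hM : T.rangeᗮᗮ ≤ M := by
    refine M.orthogonal_orthogonal ▸ orthogonal_le (orthogonal_le ?_)
    rintro _ ⟨x, rfl⟩
    exact M.starProjection_apply_mem _
  have hN : T.kerᗮ ≤ N := by
    refine N.orthogonal_orthogonal ▸ orthogonal_le fun x hx ↦ ?_
    simp [T, (N.starProjection_apply_eq_zero_iff).mpr hx]
  have hT_left : T.rangeᗮᗮ.starProjection ∘L T = T := ContinuousLinearMap.ext fun x ↦
    starProjection_eq_self_iff.mpr
      (le_orthogonal_orthogonal _ (LinearMap.mem_range_self (T : E →ₗ[𝕜] E) x))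
  have hT_right : T ∘L T.kerᗮ.starProjection = T := ContinuousLinearMap.ext fun x ↦ by
    have hx := sub_starProjection_mem_orthogonal (K := T.kerᗮ) x
    rw [T.ker.orthogonal_orthogonal, LinearMap.mem_ker, ContinuousLinearMap.coe_coe, map_sub,
      sub_eq_zero] at hx
    exact hx.symm
  calc T = T.rangeᗮᗮ.starProjection ∘L T ∘L T.kerᗮ.starProjection := by
        rw [hT_right, hT_left]
    _ = (T.rangeᗮᗮ.starProjection ∘L M.starProjection) ∘L
          (N.starProjection ∘L T.kerᗮ.starProjection) := rfl
    _ = T.rangeᗮᗮ.starProjection ∘L T.kerᗮ.starProjection := by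
        rw [starProjection_comp_starProjection_of_le hM,
          starProjection_comp_starProjection_of_ge hN]

theorem exists_ne_orthogonal_ker_starProjection_comp_eq
    (h : (M.starProjection ∘L N.starProjection).rangeᗮ ⊓
      (M.starProjection ∘L N.starProjection).ker ≠ ⊥) :
    ∃ (N' : Submodule 𝕜 E) (_ : N'.HasOrthogonalProjection),
      N' ≠ (M.starProjection ∘L N.starProjection).kerᗮ ∧
      M.starProjection ∘L N.starProjection =
        (M.starProjection ∘L N.starProjection).rangeᗮᗮ.starProjection ∘L N'.starProjection := by
  set T := M.starProjection ∘L N.starProjection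
  set K := T.rangeᗮ ⊓ T.ker
  have hK : IsClosed (K : Set E) := T.range.isClosed_orthogonal.inter T.isClosed_ker
  have := hK.completeSpace_coe
  have hKN : T.kerᗮ ⟂ K := (isOrtho_orthogonal_left _).mono_right inf_le_right
  have hKM : T.rangeᗮᗮ ⟂ K := (isOrtho_orthogonal_left _).mono_right inf_le_left
  have := hKN.hasOrthogonalProjection_sup
  refine ⟨T.kerᗮ ⊔ K, this, fun heq ↦ h ?_, ?_⟩
  · exact isOrtho_self.mp (hKN.mono_left (heq ▸ le_sup_right))
  · rw [starProjection_comp_starProjection_sup_of_isOrtho hKM hKN]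
    exact starProjection_comp_starProjection_eq_orthogonal_range_ker

theorem existsUnique_starProjection_comp_eq_iff :
    (∃! p : Submodule 𝕜 E × Submodule 𝕜 E,
      ∃ (_ : p.1.HasOrthogonalProjection) (_ : p.2.HasOrthogonalProjection),
        M.starProjection ∘L N.starProjection = p.1.starProjection ∘L p.2.starProjection) ↔
      (M.starProjection ∘L N.starProjection).rangeᗮ ⊓
        (M.starProjection ∘L N.starProjection).ker = ⊥ := by
  set T := M.starProjection ∘L N.starProjection
  constructor
  · intro huniq
    by_contra h
    obtain ⟨N', _, hne, hT'⟩ := exists_ne_orthogonal_ker_starProjection_comp_eq h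
    have hpairs := huniq.unique (y₁ := (T.rangeᗮᗮ, N')) (y₂ := (T.rangeᗮᗮ, T.kerᗮ))
      ⟨inferInstance, inferInstance, hT'⟩
      ⟨inferInstance, inferInstance, starProjection_comp_starProjection_eq_orthogonal_range_ker⟩
    exact hne (congrArg Prod.snd hpairs)
  · intro h
    refine ⟨(T.rangeᗮᗮ, T.kerᗮ), ⟨inferInstance, inferInstance,
      starProjection_comp_starProjection_eq_orthogonal_range_ker⟩, ?_⟩
    rintro ⟨M', N'⟩ ⟨_, _, hT'⟩
    rw [hT'] at h ⊢
    exact Prod.ext_iff.mpr (eq_of_orthogonal_range_inf_ker_eq_bot h)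

end ProductOfProjections

end Submodule

theorem projOnc_eq_starProjection (K : Submodule ℂ H) [K.HasOrthogonalProjection]
    (hK : IsClosed (K : Set H)) : projOnc K hK = K.starProjection :=
  rfl

theorem IsOrthoProj.isStarProjection {P : H →L[ℂ] H} (hP : IsOrthoProj P) : IsStarProjection P :=
  ⟨hP.1, hP.2⟩

theorem exists_isClosed_projOnc_comp_eq_iff {T : H →L[ℂ] H} {M N : Submodule ℂ H} :
    (∃ (hM : IsClosed (M : Set H)) (hN : IsClosed (N : Set H)),
        T = projOnc M hM ∘L projOnc N hN) ↔
      ∃ (_ : M.HasOrthogonalProjection) (_ : N.HasOrthogonalProjection),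
        T = M.starProjection ∘L N.starProjection := by
  constructor
  · rintro ⟨hM, hN, rfl⟩
    have := hasOrthogonalProjection_iff_isClosed.mpr hM
    have := hasOrthogonalProjection_iff_isClosed.mpr hN
    exact ⟨inferInstance, inferInstance,
      by rw [projOnc_eq_starProjection, projOnc_eq_starProjection]⟩
  · rintro ⟨_, _, rfl⟩
    exact ⟨hasOrthogonalProjection_iff_isClosed.mp ‹_›, hasOrthogonalProjection_iff_isClosed.mp ‹_›,
      by rw [projOnc_eq_starProjection, projOnc_eq_starProjection]⟩

theorem stmt10 (T : H →L[ℂ] H)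
    (hX : ∃ P Q : H →L[ℂ] H, IsOrthoProj P ∧ IsOrthoProj Q ∧ T = P ∘L Q) :
    (∃! p : Submodule ℂ H × Submodule ℂ H,
        ∃ (hM : IsClosed ((p.1 : Submodule ℂ H) : Set H))
          (hN : IsClosed ((p.2 : Submodule ℂ H) : Set H)),
          T = projOnc p.1 hM ∘L projOnc p.2 hN) ↔
      (LinearMap.range (T : H →ₗ[ℂ] H))ᗮ ⊓ LinearMap.ker (T : H →ₗ[ℂ] H) = ⊥ := by
  obtain ⟨P, Q, hP, hQ, rfl⟩ := hX
  obtain ⟨M, _, rfl⟩ := isStarProjection_iff_eq_starProjection.mp hP.isStarProjection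
  obtain ⟨N, _, rfl⟩ := isStarProjection_iff_eq_starProjection.mp hQ.isStarProjection
  rw [← existsUnique_starProjection_comp_eq_iff]
  exact existsUnique_congr fun _ ↦ exists_isClosed_projOnc_comp_eq_iff
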